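/- Let a_• be a graded family of nonzero ideals in a domain R and let v be a valuation of the fraction field of R that is supported on R. Then for all integers n ≥ m ≥ 1, v̂(a_•) ≤ v̂(a_{n,•}) ≤ v̂(a_{m,•}); in particular, the sequence {v̂(a_{n,•})}_{n≥1} is non-increasing and bounded below by v̂(a_•). -/
import Mathlib

open Filter

noncomputable section

/-- A graded family of ideals: `a p * a q ⊆ a (p+q)` for all `p, q ≥ 1`. -/
def IsGradedFamily {R : Type*} [CommSemiring R] (a : ℕ → Ideal R) : Prop :=
  ∀ p q : ℕ, 1 ≤ p → 1 ≤ q → a p * a q ≤ a (p + q)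

/-- The `n`-th truncation of a graded family: `a_{n,k} = a_k` for `k ≤ n`, and
`a_{n,k} = Σ_{i,j>0, i+j=k} a_{n,i}·a_{n,j}` for `k > n`. -/
def truncation {R : Type*} [CommSemiring R] (a : ℕ → Ideal R) (n : ℕ) (k : ℕ) : Ideal R :=
  Nat.strongRecOn k fun k ih =>
    if k ≤ n then a k
    else ⨆ i : Fin k, ⨆ h : 0 < i.val,
      ih i.val i.isLt *
      ih (k - i.val) (Nat.sub_lt (Nat.lt_of_le_of_lt (Nat.zero_le _) i.isLt) h)

/-- An additive real-valued valuation on a field `K`, specified on nonzero elements: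
`v(xy) = v(x) + v(y)` and `v(x+y) ≥ min(v(x), v(y))`. -/
structure AddValOn (K : Type*) [Field K] where
  toFun : K → ℝ
  map_mul' : ∀ x y : K, x ≠ 0 → y ≠ 0 → toFun (x * y) = toFun x + toFun y
  map_add' : ∀ x y : K, x ≠ 0 → y ≠ 0 → x + y ≠ 0 → min (toFun x) (toFun y) ≤ toFun (x + y)

/-- `v(a) = inf{v(f) : 0 ≠ f ∈ a}` for an ideal `a` of a domain `R`. -/
def valIdeal {R : Type*} [CommRing R] [IsDomain R] (v : AddValOn (FractionRing R))
    (a : Ideal R) : ℝ :=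
  sInf {t : ℝ | ∃ f ∈ a, f ≠ 0 ∧ t = v.toFun (algebraMap R (FractionRing R) f)}

/-- The skew Waldschmidt constant `v̂(a_•) = inf_{m ≥ 1} v(a_m)/m`
(which is also `lim_{m→∞} v(a_m)/m`). -/
def skewWaldschmidt {R : Type*} [CommRing R] [IsDomain R] (v : AddValOn (FractionRing R))
    (a : ℕ → Ideal R) : ℝ :=
  sInf {t : ℝ | ∃ m : ℕ, 1 ≤ m ∧ t = valIdeal v (a m) / (m : ℝ)}

theorem truncation_unfold {R : Type*} [CommSemiring R] (a : ℕ → Ideal R) (n k : ℕ) :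
    truncation a n k = if k ≤ n then a k
      else ⨆ i : Fin k, ⨆ _ : 0 < i.val, truncation a n i.val * truncation a n (k - i.val) := by
  rw [truncation, Nat.strongRecOn_eq]
  rfl

theorem truncation_of_le {R : Type*} [CommSemiring R] (a : ℕ → Ideal R) {n k : ℕ} (h : k ≤ n) :
    truncation a n k = a k := by rw [truncation_unfold, if_pos h]

theorem truncation_le_self {R : Type*} [CommSemiring R] {a : ℕ → Ideal R}
    (ha : IsGradedFamily a) (n : ℕ) : ∀ k, 1 ≤ k → truncation a n k ≤ a k := by
  intro k
  induction k using Nat.strong_induction_on with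
  | _ k ih =>
    intro hk
    rw [truncation_unfold]
    split
    · exact le_rfl
    · rename_i hkn
      apply iSup_le; intro i; apply iSup_le; intro hi
      have hik : (i : ℕ) < k := i.isLt
      have h1 : 1 ≤ (i : ℕ) := hi
      have h2 : 1 ≤ k - (i : ℕ) := by omega
      calc truncation a n i * truncation a n (k - i)
          ≤ a i * a (k - i) :=
            Ideal.mul_mono (ih i hik h1) (ih (k - i) (by omega) h2)
        _ ≤ a (i + (k - i)) := ha i (k - i) h1 h2
        _ = a k := by rw [Nat.add_sub_cancel' (le_of_lt hik)]

theorem truncation_mono {R : Type*} [CommSemiring R] {a : ℕ → Ideal R}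
    (ha : IsGradedFamily a) {m n : ℕ} (hmn : m ≤ n) :
    ∀ k, 1 ≤ k → truncation a m k ≤ truncation a n k := by
  intro k
  induction k using Nat.strong_induction_on with
  | _ k ih =>
    intro hk
    by_cases hkn : k ≤ n
    · rw [truncation_of_le a hkn]
      by_cases hkm : k ≤ m
      · rw [truncation_of_le a hkm]
      · exact truncation_le_self ha m k hk
    · have hkm : ¬ k ≤ m := by omega
      rw [truncation_unfold a m, if_neg hkm, truncation_unfold a n, if_neg hkn]
      apply iSup_le; intro i; apply iSup_le; intro hi
      have hik : (i : ℕ) < k := i.isLt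
      refine le_trans (Ideal.mul_mono (ih i hik hi) (ih (k - i) (by omega) (by omega))) ?_
      exact le_iSup_of_le i (le_iSup_of_le hi le_rfl)

theorem truncation_ne_bot {R : Type*} [CommRing R] [IsDomain R] {a : ℕ → Ideal R}
    (ha0 : ∀ i : ℕ, 1 ≤ i → a i ≠ ⊥) {n : ℕ} (hn : 1 ≤ n) :
    ∀ k, 1 ≤ k → truncation a n k ≠ ⊥ := by
  intro k
  induction k using Nat.strong_induction_on with
  | _ k ih =>
    intro hk
    by_cases hkn : k ≤ n
    · rw [truncation_of_le a hkn]; exact ha0 k hk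
    · push_neg at hkn
      rw [truncation_unfold, if_neg (not_le.mpr hkn)]
      have hk2 : 2 ≤ k := by omega
      have hterm : truncation a n 1 * truncation a n (k - 1) ≠ ⊥ := by
        rw [Ne, Ideal.mul_eq_bot, not_or]
        exact ⟨ih 1 (by omega) le_rfl, ih (k - 1) (by omega) (by omega)⟩
      intro hbot
      apply hterm
      rw [eq_bot_iff, ← hbot]
      have : truncation a n 1 * truncation a n (k - 1)
          ≤ ⨆ i : Fin k, ⨆ _ : 0 < i.val, truncation a n i.val * truncation a n (k - i.val) :=
        le_iSup_of_le ⟨1, by omega⟩ (le_iSup_of_le (by norm_num) le_rfl)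
      exact this

theorem valIdeal_set_nonneg {R : Type*} [CommRing R] [IsDomain R] (v : AddValOn (FractionRing R))
    (hsupp : ∀ x : R, x ≠ 0 → 0 ≤ v.toFun (algebraMap R (FractionRing R) x)) (b : Ideal R) :
    ∀ t ∈ {t : ℝ | ∃ f ∈ b, f ≠ 0 ∧ t = v.toFun (algebraMap R (FractionRing R) f)}, 0 ≤ t := by
  rintro t ⟨f, _, hf0, rfl⟩
  exact hsupp f hf0

theorem valIdeal_nonneg {R : Type*} [CommRing R] [IsDomain R] (v : AddValOn (FractionRing R))
    (hsupp : ∀ x : R, x ≠ 0 → 0 ≤ v.toFun (algebraMap R (FractionRing R) x)) (b : Ideal R) :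
    0 ≤ valIdeal v b :=
  Real.sInf_nonneg (valIdeal_set_nonneg v hsupp b)

theorem valIdeal_anti {R : Type*} [CommRing R] [IsDomain R] (v : AddValOn (FractionRing R))
    (hsupp : ∀ x : R, x ≠ 0 → 0 ≤ v.toFun (algebraMap R (FractionRing R) x))
    {b c : Ideal R} (hb : b ≠ ⊥) (hbc : b ≤ c) : valIdeal v c ≤ valIdeal v b := by
  apply csInf_le_csInf
  · exact ⟨0, fun t ht => valIdeal_set_nonneg v hsupp c t ht⟩
  · obtain ⟨f, hf, hf0⟩ := Submodule.exists_mem_ne_zero_of_ne_bot hb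
    exact ⟨_, f, hf, hf0, rfl⟩
  · rintro t ⟨f, hf, hf0, rfl⟩
    exact ⟨f, hbc hf, hf0, rfl⟩

theorem my_csInf_le_csInf_of_forall_exists_le {s t : Set ℝ} (hs : BddBelow s)
    (ht : t.Nonempty) (h : ∀ y ∈ t, ∃ x ∈ s, x ≤ y) : sInf s ≤ sInf t := by
  refine le_csInf ht fun y hy => ?_
  obtain ⟨x, hxs, hxy⟩ := h y hy
  exact le_trans (csInf_le hs hxs) hxy

theorem skewWaldschmidt_le {R : Type*} [CommRing R] [IsDomain R] (v : AddValOn (FractionRing R))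
    (hsupp : ∀ x : R, x ≠ 0 → 0 ≤ v.toFun (algebraMap R (FractionRing R) x))
    {b c : ℕ → Ideal R} (hb : ∀ k, 1 ≤ k → b k ≠ ⊥) (hbc : ∀ k, 1 ≤ k → b k ≤ c k) :
    skewWaldschmidt v c ≤ skewWaldschmidt v b := by
  apply my_csInf_le_csInf_of_forall_exists_le
  · refine ⟨0, ?_⟩
    rintro t ⟨m, hm, rfl⟩
    exact div_nonneg (valIdeal_nonneg v hsupp _) (Nat.cast_nonneg m)
  · exact ⟨_, 1, le_rfl, rfl⟩
  · rintro t ⟨m, hm, rfl⟩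
    refine ⟨_, ⟨m, hm, rfl⟩, ?_⟩
    have hm' : (0:ℝ) < m := by exact_mod_cast hm
    gcongr
    exact valIdeal_anti v hsupp (hb m hm) (hbc m hm)

/-- first part of the proof of Theorem `thm.vhatTruncation`. For a graded
family `a_•` of nonzero ideals in a domain `R` and a valuation `v` of `Frac(R)` supported on
`R`: for all `n ≥ m ≥ 1`, `v̂(a_•) ≤ v̂(a_{n,•}) ≤ v̂(a_{m,•})`; in particular the sequence
`{v̂(a_{n,•})}` is non-increasing (for `n ≥ 1`) and bounded below by `v̂(a_•)`. -/
theorem skewWaldschmidt_truncation_monotone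
    {R : Type*} [CommRing R] [IsDomain R]
    (a : ℕ → Ideal R) (ha : IsGradedFamily a) (ha0 : ∀ i : ℕ, 1 ≤ i → a i ≠ ⊥)
    (v : AddValOn (FractionRing R))
    (hsupp : ∀ x : R, x ≠ 0 → 0 ≤ v.toFun (algebraMap R (FractionRing R) x)) :
    ∀ m n : ℕ, 1 ≤ m → m ≤ n →
      skewWaldschmidt v a ≤ skewWaldschmidt v (truncation a n) ∧
      skewWaldschmidt v (truncation a n) ≤ skewWaldschmidt v (truncation a m) := by
  intro m n hm hmn
  have hn : 1 ≤ n := le_trans hm hmn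
  constructor
  · exact skewWaldschmidt_le v hsupp (truncation_ne_bot ha0 hn)
      (fun k hk => truncation_le_self ha n k hk)
  · exact skewWaldschmidt_le v hsupp (truncation_ne_bot ha0 hm)
      (fun k hk => truncation_mono ha hmn k hk)

end
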